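/- For a plane forest F with k+1 leaves, the number of linear extensions of F whose descent composition is (1^i, n−i) equals the binomial coefficient C(k, i), for 0 ≤ i ≤ k; in particular, the generating polynomial Σ_i (#extensions of shape (1^i,n−i))·(−q)^i·(1−q) is divisible by (1−q)² unless F is the linear tree (path). -/

import Mathlib

/-- Plane trees: a node with an ordered (possibly empty) list of subtrees. -/
inductive PlaneTree : Type
  | node : List PlaneTree → PlaneTree

namespace PlaneTree

mutual
  /-- Number of nodes of a plane tree. -/
  def sizeT : PlaneTree → ℕ
    | .node ts => 1 + sizeF ts
  /-- Number of nodes of a plane forest. -/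
  def sizeF : List PlaneTree → ℕ
    | [] => 0
    | t :: ts => sizeT t + sizeF ts
end

/-- `PosT t p` : `p` (a path of child indices) is the position of a node of the tree `t`. -/
inductive PosT : PlaneTree → List ℕ → Prop
  | root (ts : List PlaneTree) : PosT (.node ts) []
  | child {ts : List PlaneTree} {t : PlaneTree} {i : ℕ} {q : List ℕ} :
      ts[i]? = some t → PosT t q → PosT (.node ts) (i :: q)

/-- Positions of the nodes of a forest: a tree index followed by a path in that tree.
A position `q` that strictly extends `p` is a (strict) descendant of `p`; in the
forest poset (roots maximal) this means `q <_F p`. -/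
def PosF (F : List PlaneTree) : List ℕ → Prop
  | [] => False
  | i :: q => ∃ t, F[i]? = some t ∧ PosT t q

/-- Comparison of positions in postorder: `postLt p q` holds iff the node at position `p`
comes strictly before the node at position `q` in the postorder traversal, i.e. the
canonical (postorder) label of `p` is smaller than that of `q`. -/
def postLt : List ℕ → List ℕ → Prop
  | [], _ => False
  | _ :: _, [] => True
  | a :: p, b :: q => a < b ∨ (a = b ∧ postLt p q)

/-- A linear extension of the forest `F` (canonically labelled, roots maximal),
presented as the list of positions of the nodes in the order they are visited:
it lists every node exactly once, and no node appears before one of its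
(strict) descendants, i.e. an earlier position is never a strict prefix of a later one. -/
def IsLinExt (F : List PlaneTree) (L : List (List ℕ)) : Prop :=
  L.Nodup ∧ (∀ p, p ∈ L ↔ PosF F p) ∧
  L.Pairwise (fun p q => ¬(p <+: q ∧ p ≠ q))

mutual
  /-- Number of leaves of a plane tree. -/
  def leafT : PlaneTree → ℕ
    | .node [] => 1
    | .node (t :: ts) => leafF (t :: ts)
  /-- Number of leaves of a plane forest. -/
  def leafF : List PlaneTree → ℕ
    | [] => 0
    | t :: ts => leafT t + leafF ts
end

/-! ### Auxiliary development -/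

lemma posT_node_cons {ts : List PlaneTree} {i : ℕ} {q : List ℕ} :
    PosT (.node ts) (i :: q) ↔ ∃ t, ts[i]? = some t ∧ PosT t q := by
  constructor
  · rintro (_ | ⟨h, h'⟩); exact ⟨_, ‹_›, ‹_›⟩
  · rintro ⟨t, h, h'⟩; exact PosT.child h h'

lemma posF_node {ts : List PlaneTree} {p : List ℕ} :
    PosF ts p ↔ (p ≠ [] ∧ PosT (.node ts) p) := by
  cases p with
  | nil => simp [PosF]
  | cons i q => simp [PosF, posT_node_cons]

@[simp] lemma postLt_nil (q : List ℕ) : ¬ postLt [] q := fun h => h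
@[simp] lemma postLt_cons_nil (a : ℕ) (p : List ℕ) : postLt (a :: p) [] := trivial
@[simp] lemma postLt_cons_cons (a b : ℕ) (p q : List ℕ) :
    postLt (a :: p) (b :: q) ↔ a < b ∨ (a = b ∧ postLt p q) := Iff.rfl

lemma postLt_irrefl : ∀ p, ¬ postLt p p
  | [] => by simp
  | a :: p => by simp [postLt_irrefl p]

lemma postLt_trans : ∀ p q r, postLt p q → postLt q r → postLt p r
  | [], _, _ => by simp
  | _ :: _, [], _ => by simp
  | a :: p, b :: q, [] => by simp
  | a :: p, b :: q, c :: r => by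
    simp only [postLt_cons_cons]
    rintro (h | ⟨rfl, h⟩) (h' | ⟨rfl, h'⟩)
    · exact Or.inl (h.trans h')
    · exact Or.inl h
    · exact Or.inl h'
    · exact Or.inr ⟨rfl, postLt_trans _ _ _ h h'⟩

lemma postLt_trichotomy : ∀ p q, postLt p q ∨ p = q ∨ postLt q p
  | [], [] => by simp
  | [], b :: q => by simp
  | a :: p, [] => by simp
  | a :: p, b :: q => by
    rcases Nat.lt_trichotomy a b with h | rfl | h
    · exact Or.inl (Or.inl h)
    · rcases postLt_trichotomy p q with h | rfl | h
      · exact Or.inl (Or.inr ⟨rfl, h⟩)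
      · exact Or.inr (Or.inl rfl)
      · exact Or.inr (Or.inr (Or.inr ⟨rfl, h⟩))
    · exact Or.inr (Or.inr (Or.inl h))

lemma postLt_asymm {p q} (h : postLt p q) : ¬ postLt q p :=
  fun h' => postLt_irrefl p (postLt_trans _ _ _ h h')

instance : IsTrans (List ℕ) postLt := ⟨postLt_trans⟩
instance : IsIrrefl (List ℕ) postLt := ⟨postLt_irrefl⟩
instance : IsAntisymm (List ℕ) postLt := ⟨fun _ _ h h' => absurd h' (postLt_asymm h)⟩

/-- a strict descendant is postorder-smaller -/
lemma postLt_append : ∀ (p r : List ℕ), r ≠ [] → postLt (p ++ r) p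
  | [], [], h => absurd rfl h
  | [], a :: r, _ => by simp
  | a :: p, r, h => Or.inr ⟨rfl, postLt_append p r h⟩

def bump : List ℕ → List ℕ
  | [] => []
  | a :: p => (a + 1) :: p

mutual
  def postT : PlaneTree → List (List ℕ)
    | .node ts => postF ts ++ [[]]
  def postF : List PlaneTree → List (List ℕ)
    | [] => []
    | t :: ts => (postT t).map (List.cons 0) ++ (postF ts).map bump
end

lemma postF_ne_nil : ∀ (F : List PlaneTree), ∀ p ∈ postF F, p ≠ []
  | [] => by simp [postF]
  | t :: ts => by
    simp only [postF, List.mem_append, List.mem_map]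
    rintro p (⟨q, _, rfl⟩ | ⟨q, hq, rfl⟩)
    · simp
    · have := postF_ne_nil ts q hq
      cases q with
      | nil => exact absurd rfl this
      | cons a q => simp [bump]

mutual
  lemma length_postT : ∀ t, (postT t).length = sizeT t
    | .node ts => by simp [postT, sizeT, length_postF ts, Nat.add_comm]
  lemma length_postF : ∀ F, (postF F).length = sizeF F
    | [] => rfl
    | t :: ts => by simp [postF, sizeF, length_postT t, length_postF ts]
end

mutual
  lemma mem_postT : ∀ t p, p ∈ postT t ↔ PosT t p
    | .node ts, p => by
      simp only [postT, List.mem_append, List.mem_singleton]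
      rw [mem_postF ts p, posF_node]
      constructor
      · rintro (⟨-, h⟩ | rfl)
        · exact h
        · exact PosT.root ts
      · intro h
        by_cases hp : p = []
        · exact Or.inr hp
        · exact Or.inl ⟨hp, h⟩
  lemma mem_postF : ∀ F p, p ∈ postF F ↔ PosF F p
    | [], p => by cases p <;> simp [postF, PosF]
    | t :: ts, p => by
      simp only [postF, List.mem_append, List.mem_map]
      constructor
      · rintro (⟨q, hq, rfl⟩ | ⟨q, hq, rfl⟩)
        · exact ⟨t, rfl, (mem_postT t q).1 hq⟩
        · have hq' := (mem_postF ts q).1 hq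
          obtain ⟨j, r, rfl⟩ : ∃ j r, q = j :: r := by
            cases q with
            | nil => exact absurd rfl (postF_ne_nil ts [] hq)
            | cons j r => exact ⟨j, r, rfl⟩
          obtain ⟨t', h1, h2⟩ := hq'
          exact ⟨t', by simpa [bump] using h1, h2⟩
      · intro hp
        obtain ⟨i, q, rfl⟩ : ∃ i q, p = i :: q := by
          cases p with
          | nil => exact absurd hp (by simp [PosF])
          | cons i q => exact ⟨i, q, rfl⟩
        obtain ⟨t', h1, h2⟩ := hp
        cases i with
        | zero =>
          left
          refine ⟨q, (mem_postT t q).2 ?_, rfl⟩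
          obtain rfl : t = t' := by simpa using h1
          exact h2
        | succ j =>
          right
          exact ⟨j :: q, (mem_postF ts (j :: q)).2 ⟨t', by simpa using h1, h2⟩, rfl⟩
end

lemma postLt_bump {p q : List ℕ} (h : postLt p q) : postLt (bump p) (bump q) := by
  cases p with
  | nil => exact absurd h (postLt_nil q)
  | cons a p =>
    cases q with
    | nil => cases p <;> simp [bump]
    | cons b q =>
      rcases h with h | ⟨rfl, h⟩
      · exact Or.inl (by omega)
      · exact Or.inr ⟨rfl, h⟩

mutual
  lemma pairwise_postT : ∀ t, (postT t).Pairwise postLt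
    | .node ts => by
      rw [postT, List.pairwise_append]
      refine ⟨pairwise_postF ts, by simp, ?_⟩
      intro p hp q hq
      rw [List.mem_singleton] at hq
      subst hq
      have := postF_ne_nil ts p hp
      cases p with
      | nil => exact absurd rfl this
      | cons a p => simp
  lemma pairwise_postF : ∀ F, (postF F).Pairwise postLt
    | [] => List.Pairwise.nil
    | t :: ts => by
      rw [postF, List.pairwise_append]
      refine ⟨?_, ?_, ?_⟩
      · exact (List.pairwise_map.2 ((pairwise_postT t).imp fun h => Or.inr ⟨rfl, h⟩))
      · exact (List.pairwise_map.2 ((pairwise_postF ts).imp postLt_bump))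
      · intro p hp q hq
        rw [List.mem_map] at hp hq
        obtain ⟨p', -, rfl⟩ := hp
        obtain ⟨q', hq', rfl⟩ := hq
        have := postF_ne_nil ts q' hq'
        cases q' with
        | nil => exact absurd rfl this
        | cons b r => exact Or.inl (Nat.succ_pos b)
end

/-! ### Leaves -/

lemma posT_nil (t : PlaneTree) : PosT t [] := by cases t with | node ts => exact PosT.root ts

lemma exists_get?_zero {α : Type*} {l : List α} {i : ℕ} {t : α} (h : l[i]? = some t) :
    ∃ t0, l[0]? = some t0 := by
  cases l with
  | nil => simp at h
  | cons x xs => exact ⟨x, rfl⟩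

lemma posT_child_zero : ∀ (t : PlaneTree) (p : List ℕ) (a : ℕ) (r : List ℕ),
    PosT t (p ++ a :: r) → PosT t (p ++ [0])
  | .node ts, [], a, r, h => by
    rw [List.nil_append] at h ⊢
    rw [posT_node_cons] at h ⊢
    obtain ⟨t', h1, -⟩ := h
    obtain ⟨t0, h0⟩ := exists_get?_zero h1
    exact ⟨t0, h0, posT_nil t0⟩
  | .node ts, b :: p, a, r, h => by
    rw [List.cons_append] at h ⊢
    rw [posT_node_cons] at h ⊢
    obtain ⟨t', h1, h2⟩ := h
    exact ⟨t', h1, posT_child_zero t' p a r h2⟩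

lemma posF_child_zero {F : List PlaneTree} {p : List ℕ} {a : ℕ} {r : List ℕ}
    (h : PosF F (p ++ a :: r)) : PosF F (p ++ [0]) := by
  cases p with
  | nil =>
    obtain ⟨t, h1, -⟩ := h
    obtain ⟨t0, h0⟩ := exists_get?_zero h1
    exact ⟨t0, h0, posT_nil t0⟩
  | cons i q =>
    obtain ⟨t, h1, h2⟩ := h
    exact ⟨t, h1, posT_child_zero t q a r h2⟩

/-- A leaf of the forest. -/
def IsLeafF (F : List PlaneTree) (p : List ℕ) : Prop := PosF F p ∧ ¬ PosF F (p ++ [0])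

/-- A leaf has no strict descendants. -/
lemma IsLeafF.eq_of_prefix {F : List PlaneTree} {p q : List ℕ} (hp : IsLeafF F p)
    (hq : PosF F q) (hpre : p <+: q) : p = q := by
  obtain ⟨r, rfl⟩ := hpre
  cases r with
  | nil => simp
  | cons a r => exact absurd (posF_child_zero hq) hp.2

mutual
  def leavesT : PlaneTree → List (List ℕ)
    | .node [] => [[]]
    | .node (t :: ts) => leavesF (t :: ts)
  def leavesF : List PlaneTree → List (List ℕ)
    | [] => []
    | t :: ts => (leavesT t).map (List.cons 0) ++ (leavesF ts).map bump
end

mutual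
  lemma length_leavesT : ∀ t, (leavesT t).length = leafT t
    | .node [] => rfl
    | .node (t :: ts) => by
      rw [leavesT, leafT]; exact length_leavesF (t :: ts)
  lemma length_leavesF : ∀ F, (leavesF F).length = leafF F
    | [] => rfl
    | t :: ts => by
      rw [leavesF, leafF, List.length_append, List.length_map, List.length_map,
        length_leavesT t, length_leavesF ts]
end
mutual
  lemma sublist_leavesT : ∀ t, List.Sublist (leavesT t) (postT t)
    | .node [] => by rw [leavesT, postT, postF]; simp
    | .node (t :: ts) => by
      rw [leavesT, postT]
      exact (sublist_leavesF (t :: ts)).trans (List.sublist_append_left _ _)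
  lemma sublist_leavesF : ∀ F, List.Sublist (leavesF F) (postF F)
    | [] => List.Sublist.refl _
    | t :: ts => by
      rw [leavesF, postF]
      exact ((sublist_leavesT t).map _).append ((sublist_leavesF ts).map _)
end

mutual
  lemma mem_leavesT : ∀ t p, p ∈ leavesT t ↔ PosT t p ∧ ¬ PosT t (p ++ [0])
    | .node [], p => by
      rw [leavesT]
      cases p with
      | nil =>
        refine iff_of_true (List.mem_singleton_self _) ⟨PosT.root [], ?_⟩
        rw [List.nil_append, posT_node_cons]
        rintro ⟨t, ht, -⟩
        simp at ht
      | cons i q => simp [posT_node_cons]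
    | .node (t :: ts), p => by
      rw [leavesT, mem_leavesF (t :: ts) p, IsLeafF, posF_node, posF_node]
      constructor
      · rintro ⟨⟨-, h1⟩, h2⟩
        exact ⟨h1, fun hc => h2 ⟨by simp, hc⟩⟩
      · rintro ⟨h1, h2⟩
        cases p with
        | nil =>
          exact absurd (PosT.child (rfl : (t :: ts)[0]? = some t) (posT_nil t))
            (by simpa using h2)
        | cons i q =>
          exact ⟨⟨by simp, h1⟩, fun hc => h2 hc.2⟩
  lemma mem_leavesF : ∀ F p, p ∈ leavesF F ↔ IsLeafF F p
    | [], p => by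
      rw [leavesF, IsLeafF]
      cases p <;> simp [PosF]
    | t :: ts, p => by
      rw [leavesF, IsLeafF]
      simp only [List.mem_append, List.mem_map]
      constructor
      · rintro (⟨q, hq, rfl⟩ | ⟨q, hq, rfl⟩)
        · obtain ⟨h1, h2⟩ := (mem_leavesT t q).1 hq
          refine ⟨⟨t, rfl, h1⟩, ?_⟩
          rw [List.cons_append]
          rintro ⟨t', ht', hp⟩
          obtain rfl : t = t' := by simpa using ht'
          exact h2 hp
        · obtain ⟨j, r, rfl⟩ : ∃ j r, q = j :: r := by
            cases q with
            | nil =>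
              exact absurd rfl (postF_ne_nil ts [] ((sublist_leavesF ts).mem hq))
            | cons j r => exact ⟨j, r, rfl⟩
          obtain ⟨⟨t', h1, h2⟩, h3⟩ := (mem_leavesF ts (j :: r)).1 hq
          rw [bump]
          refine ⟨⟨t', by simpa using h1, h2⟩, ?_⟩
          rw [List.cons_append]
          rintro ⟨t'', ht'', hp⟩
          exact h3 ⟨t'', by simpa using ht'', hp⟩
      · rintro ⟨hp, h3⟩
        obtain ⟨i, q, rfl⟩ : ∃ i q, p = i :: q := by
          cases p with
          | nil => exact absurd hp (by simp [PosF])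
          | cons i q => exact ⟨i, q, rfl⟩
        obtain ⟨t', h1, h2⟩ := hp
        rw [List.cons_append] at h3
        cases i with
        | zero =>
          left
          obtain rfl : t = t' := by simpa using h1
          refine ⟨q, (mem_leavesT t q).2 ⟨h2, fun hc => h3 ⟨t, rfl, hc⟩⟩, rfl⟩
        | succ j =>
          right
          refine ⟨j :: q, (mem_leavesF ts (j :: q)).2 ⟨⟨t', by simpa using h1, h2⟩, ?_⟩, rfl⟩
          rintro ⟨t'', ht'', hp⟩
          exact h3 ⟨t'', by simpa using ht'', hp⟩
end

mutual
  lemma leafT_le_sizeT : ∀ t, leafT t ≤ sizeT t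
    | .node [] => le_refl _
    | .node (t :: ts) => by
      rw [leafT, sizeT]
      exact (leafF_le_sizeF (t :: ts)).trans (Nat.le_add_left _ _)
  lemma leafF_le_sizeF : ∀ F, leafF F ≤ sizeF F
    | [] => le_refl _
    | t :: ts => by
      rw [leafF, sizeF]
      exact Nat.add_le_add (leafT_le_sizeT t) (leafF_le_sizeF ts)
end

/-! ### Generic sorted-list facts -/

instance : IsTrans (List ℕ) (flip postLt) := ⟨fun _ _ _ h h' => postLt_trans _ _ _ h' h⟩
instance : IsAntisymm (List ℕ) (flip postLt) := ⟨fun _ _ h h' => absurd h (postLt_asymm h')⟩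

lemma headI_mem' {α : Type*} [Inhabited α] {l : List α} (h : l ≠ []) : l.headI ∈ l := by
  cases l with
  | nil => exact absurd rfl h
  | cons a t => exact List.mem_cons_self

lemma getD_zero_eq_headI {α : Type*} [Inhabited α] {l : List α} (h : l ≠ []) (d : α) :
    l.getD 0 d = l.headI := by
  cases l with
  | nil => exact absurd rfl h
  | cons a t => rfl

lemma getD_eq_get_old {α : Type*} (l : List α) (d : α) {n : ℕ} (hn : n < l.length) :
    l.getD n d = l.get ⟨n, hn⟩ :=
  List.getD_eq_get l d ⟨n, hn⟩

lemma eq_of_perm_of_sorted_old {α : Type*} {r : α → α → Prop} [IsAntisymm α r]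
    {l₁ l₂ : List α} (hp : l₁.Perm l₂) (h1 : l₁.Pairwise r) (h2 : l₂.Pairwise r) : l₁ = l₂ :=
  List.Perm.eq_of_pairwise (fun _ _ _ _ h h' => antisymm h h') h1 h2 hp

lemma getD_mem {α : Type*} {l : List α} {n : ℕ} (d : α) (h : n < l.length) :
    l.getD n d ∈ l := by
  rw [getD_eq_get_old _ _ h]
  exact List.get_mem _ _

lemma nodup_postF (F : List PlaneTree) : (postF F).Nodup :=
  (pairwise_postF F).imp fun h => by rintro rfl; exact postLt_irrefl _ h

lemma descents_append {A B : List (List ℕ)} (hA : A.Pairwise (flip postLt))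
    (hB : B.Pairwise postLt) (hBne : B ≠ [])
    (hcross : ∀ p ∈ A, postLt B.headI p) {j : ℕ} (hj1 : 1 ≤ j)
    (hj2 : j < A.length + B.length) :
    (postLt ((A ++ B).getD j []) ((A ++ B).getD (j - 1) []) ↔ j ≤ A.length) := by
  rcases lt_trichotomy j A.length with h | h | h
  · rw [List.getD_append _ _ _ _ h, List.getD_append _ _ _ _ (by omega)]
    refine iff_of_true ?_ (by omega)
    rw [getD_eq_get_old _ _ h, getD_eq_get_old _ _ (by omega : j - 1 < A.length)]
    exact List.pairwise_iff_get.1 hA ⟨j - 1, by omega⟩ ⟨j, h⟩ (Fin.mk_lt_mk.2 (by omega))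
  · subst h
    rw [List.getD_append_right _ _ _ _ (le_refl _), Nat.sub_self,
      List.getD_append _ _ _ _ (by omega)]
    refine iff_of_true ?_ (le_refl _)
    rw [getD_zero_eq_headI hBne]
    exact hcross _ (getD_mem _ (by omega))
  · rw [List.getD_append_right _ _ _ _ (by omega), List.getD_append_right _ _ _ _ (by omega)]
    refine iff_of_false ?_ (by omega)
    have h1 : j - 1 - A.length < B.length := by omega
    have h2 : j - A.length < B.length := by omega
    rw [getD_eq_get_old _ _ h1, getD_eq_get_old _ _ h2]
    exact postLt_asymm (List.pairwise_iff_get.1 hB ⟨j - 1 - A.length, h1⟩ ⟨j - A.length, h2⟩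
      (Fin.mk_lt_mk.2 (by omega)))

/-! ### The extension associated to a set of leaves -/

/-- The candidate linear extension: chosen leaves in decreasing order, then the rest
in increasing (postorder) order. -/
def extL (S : Finset (List ℕ)) (F : List PlaneTree) : List (List ℕ) :=
  ((postF F).filter (· ∈ S)).reverse ++ (postF F).filter (· ∉ S)

lemma extL_perm (S : Finset (List ℕ)) (F : List PlaneTree) : (extL S F).Perm (postF F) := by
  have h1 := List.filter_append_perm (fun p => p ∈ S) (postF F)
  refine List.Perm.trans (List.Perm.append ?_ ?_) h1
  · exact List.reverse_perm _
  · apply List.Perm.of_eq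
    apply List.filter_congr
    intro x _
    simp [decide_not]

lemma head_min {F : List PlaneTree} (hne : postF F ≠ []) :
    ∀ p ∈ postF F, p ≠ (postF F).headI → postLt (postF F).headI p := by
  obtain ⟨h₀, rest, hP⟩ := List.exists_cons_of_ne_nil hne
  rw [hP]
  intro p hp hne'
  rcases List.mem_cons.1 hp with rfl | hp'
  · exact absurd rfl hne'
  · exact (List.pairwise_cons.1 (hP ▸ pairwise_postF F)).1 p hp'

lemma head_leaf {F : List PlaneTree} (hne : postF F ≠ []) : IsLeafF F (postF F).headI := by
  refine ⟨(mem_postF F _).1 (headI_mem' hne), fun hc => ?_⟩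
  have hmem : (postF F).headI ++ [0] ∈ postF F := (mem_postF F _).2 hc
  have hne' : (postF F).headI ++ [0] ≠ (postF F).headI := by simp
  exact postLt_asymm (head_min hne _ hmem hne') (postLt_append _ _ (by simp))

lemma toFinset_filter_mem {S : Finset (List ℕ)} {P : List (List ℕ)}
    (hS : ∀ p ∈ S, p ∈ P) : (P.filter (· ∈ S)).toFinset = S := by
  rw [List.toFinset_filter]
  ext p
  simp only [Finset.mem_filter, List.mem_toFinset, decide_eq_true_eq]
  exact ⟨fun h => h.2, fun h => ⟨hS p h, h⟩⟩

lemma length_filter_mem {S : Finset (List ℕ)} {F : List PlaneTree}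
    (hS : ∀ p ∈ S, p ∈ postF F) :
    ((postF F).filter (· ∈ S)).length = S.card := by
  have hnd : ((postF F).filter (· ∈ S)).Nodup := (nodup_postF F).filter _
  rw [← List.toFinset_card_of_nodup hnd, toFinset_filter_mem hS]

lemma extL_spec {F : List PlaneTree} {n : ℕ} (hF : sizeF F = n) (hn : 1 ≤ n)
    {S : Finset (List ℕ)} (hS : S ⊆ ((leavesF F).toFinset.erase (postF F).headI)) :
    IsLinExt F (extL S F) ∧ ∀ j ∈ Finset.Icc 1 (n - 1),
      (postLt ((extL S F).getD j []) ((extL S F).getD (j - 1) []) ↔ j ≤ S.card) := by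
  have hlen : (postF F).length = n := (length_postF F).trans hF
  have hne : postF F ≠ [] := by
    intro h; rw [h] at hlen; simp at hlen; omega
  set h₀ := (postF F).headI with hh₀
  have hleaf : ∀ p ∈ S, IsLeafF F p := by
    intro p hp
    have := Finset.mem_of_mem_erase (hS hp)
    rw [List.mem_toFinset] at this
    exact (mem_leavesF F p).1 this
  have hneh : ∀ p ∈ S, p ≠ h₀ := fun p hp => Finset.ne_of_mem_erase (hS hp)
  have hmemP : ∀ p ∈ S, p ∈ postF F := fun p hp => (mem_postF F p).2 (hleaf p hp).1
  set A := ((postF F).filter (· ∈ S)).reverse with hA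
  set B := (postF F).filter (· ∉ S) with hB
  have hAmem : ∀ p ∈ A, p ∈ S := by
    intro p hp
    rw [hA, List.mem_reverse, List.mem_filter] at hp
    simpa using hp.2
  have hBmem : ∀ p ∈ B, p ∈ postF F ∧ p ∉ S := by
    intro p hp
    rw [hB, List.mem_filter] at hp
    simpa using hp
  have h₀S : h₀ ∉ S := fun hc => (hneh h₀ hc) rfl
  obtain ⟨h0', rest, hP⟩ := List.exists_cons_of_ne_nil hne
  have hh0' : h0' = h₀ := by rw [hh₀, hP]; rfl
  have hBcons : B = h₀ :: rest.filter (· ∉ S) := by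
    rw [hB, hP, hh0'] at *
    rw [List.filter_cons_of_pos (by simpa using h₀S)]
  have hBne : B ≠ [] := by rw [hBcons]; simp
  have hBhead : B.headI = h₀ := by rw [hBcons]; rfl
  have hApair : A.Pairwise (flip postLt) :=
    List.pairwise_reverse.2 ((pairwise_postF F).filter _)
  have hBpair : B.Pairwise postLt := (pairwise_postF F).filter _
  have hcross : ∀ p ∈ A, postLt B.headI p := by
    intro p hp
    rw [hBhead]
    exact head_min hne p (hmemP p (hAmem p hp)) (hneh p (hAmem p hp))
  have hAlen : A.length = S.card := by
    rw [hA, List.length_reverse]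
    exact length_filter_mem hmemP
  have hlenAB : A.length + B.length = n := by
    have := (extL_perm S F).length_eq
    rw [extL, List.length_append] at this
    rw [hA, hB]
    omega
  constructor
  · refine ⟨(extL_perm S F).nodup_iff.2 (nodup_postF F), ?_, ?_⟩
    · intro p
      rw [(extL_perm S F).mem_iff]
      exact mem_postF F p
    · rw [extL, List.pairwise_append]
      refine ⟨?_, ?_, ?_⟩
      · apply List.pairwise_of_forall_mem_list
        intro p hp q hq
        rintro ⟨hpre, hne'⟩
        exact hne' ((hleaf p (hAmem p hp)).eq_of_prefix
          ((mem_postF F q).1 (hmemP q (hAmem q hq))) hpre)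
      · refine hBpair.imp ?_
        intro p q h
        rintro ⟨⟨r, rfl⟩, hne'⟩
        have hr : r ≠ [] := by rintro rfl; simp at hne'
        exact postLt_asymm h (postLt_append _ _ hr)
      · intro p hp q hq
        rintro ⟨hpre, hne'⟩
        exact hne' ((hleaf p (hAmem p hp)).eq_of_prefix
          ((mem_postF F q).1 (hBmem q hq).1) hpre)
  · intro j hj
    rw [Finset.mem_Icc] at hj
    rw [← hAlen]
    exact descents_append hApair hBpair hBne hcross hj.1 (by omega)

/-! ### Every extension with the given descent pattern arises from a set of leaves -/

lemma extL_unique {F : List PlaneTree} {n : ℕ} (hF : sizeF F = n) (hn : 1 ≤ n)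
    {i : ℕ} (hi : i ≤ n - 1) {L : List (List ℕ)} (hL : IsLinExt F L)
    (hdesc : ∀ j ∈ Finset.Icc 1 (n - 1),
      (postLt (L.getD j []) (L.getD (j - 1) []) ↔ j ≤ i)) :
    ∃ S, S ⊆ (leavesF F).toFinset.erase (postF F).headI ∧ S.card = i ∧ L = extL S F := by
  classical
  obtain ⟨hnd, hmem, hpw⟩ := hL
  have hlenP : (postF F).length = n := (length_postF F).trans hF
  have hperm : L.Perm (postF F) := by
    apply List.perm_of_nodup_nodup_toFinset_eq hnd (nodup_postF F)
    ext p
    simp only [List.mem_toFinset]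
    rw [hmem p, mem_postF]
  have hlen : L.length = n := hperm.length_eq.trans hlenP
  have hne : postF F ≠ [] := by
    intro h; rw [h] at hlenP; simp at hlenP; omega
  set h₀ := (postF F).headI with hh₀
  have hmemL : ∀ {m : ℕ}, m < n → L.getD m [] ∈ L := fun {m} hm => getD_mem _ (by omega)
  have hdec : ∀ m, m + 1 ≤ i → postLt (L.getD (m + 1) []) (L.getD m []) := by
    intro m hm
    have h := (hdesc (m + 1) (Finset.mem_Icc.2 ⟨by omega, by omega⟩)).2 hm
    simpa using h
  have hgetne : ∀ {a b : ℕ}, a < n → b < n → a ≠ b → L.getD a [] ≠ L.getD b [] := by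
    intro a b ha hb hab
    rw [getD_eq_get_old _ _ (by omega), getD_eq_get_old _ _ (by omega)]
    intro h
    have := List.nodup_iff_injective_get.1 hnd h
    rw [Fin.mk.injEq] at this
    exact hab this
  have hinc : ∀ j, i + 1 ≤ j → j ≤ n - 1 → postLt (L.getD (j - 1) []) (L.getD j []) := by
    intro j h1 h2
    have hlt := hdesc j (Finset.mem_Icc.2 ⟨by omega, h2⟩)
    have hnlt : ¬ postLt (L.getD j []) (L.getD (j - 1) []) := fun hc => by
      have := hlt.1 hc; omega
    rcases postLt_trichotomy (L.getD (j - 1) []) (L.getD j []) with h | h | h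
    · exact h
    · exact absurd h (hgetne (by omega) (by omega) (by omega))
    · exact absurd h hnlt
  have hdecs : ∀ m, m ≤ i → ∀ m', m' < m → postLt (L.getD m []) (L.getD m' []) := by
    intro m
    induction m with
    | zero => omega
    | succ t ih =>
      intro hm m' hm'
      have h1 : postLt (L.getD (t + 1) []) (L.getD t []) := hdec t hm
      rcases Nat.lt_or_ge m' t with h | h
      · exact postLt_trans _ _ _ h1 (ih (by omega) m' h)
      · obtain rfl : m' = t := by omega
        exact h1
  have hincs : ∀ m, m ≤ n - 1 → ∀ m', i ≤ m' → m' < m → postLt (L.getD m' []) (L.getD m []) := by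
    intro m
    induction m with
    | zero => omega
    | succ t ih =>
      intro hm m' him hm'
      have h1 : postLt (L.getD t []) (L.getD (t + 1) []) := by
        have := hinc (t + 1) (by omega) hm
        simpa using this
      rcases Nat.lt_or_ge m' t with h | h
      · exact postLt_trans _ _ _ (ih (by omega) m' him h) h1
      · obtain rfl : m' = t := by omega
        exact h1
  have hiln : i ≤ n := by omega
  have hA'len : (L.take i).length = i := by
    rw [List.length_take, hlen]
    exact min_eq_left hiln
  have hB'len : (L.drop i).length = n - i := by
    rw [List.length_drop, hlen]
  have hA'get : ∀ m (h : m < (L.take i).length), (L.take i).get ⟨m, h⟩ = L.getD m [] := by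
    intro m h
    rw [← getD_eq_get_old]
    conv_rhs => rw [← List.take_append_drop i L]
    rw [List.getD_append _ _ _ _ h]
  have hB'get : ∀ m (h : m < (L.drop i).length), (L.drop i).get ⟨m, h⟩ = L.getD (i + m) [] := by
    intro m h
    rw [← getD_eq_get_old]
    conv_rhs => rw [← List.take_append_drop i L]
    rw [List.getD_append_right _ _ _ _ (by rw [hA'len]; omega)]
    congr 1
    rw [hA'len]
    omega
  have hApair : (L.take i).Pairwise (flip postLt) := by
    rw [List.pairwise_iff_get]
    intro a b hab
    rw [hA'get a a.2, hA'get b b.2]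
    have hb : (b : ℕ) < i := lt_of_lt_of_eq b.2 hA'len
    exact hdecs b (by omega) a hab
  have hBpair : (L.drop i).Pairwise postLt := by
    rw [List.pairwise_iff_get]
    intro a b hab
    rw [hB'get a a.2, hB'get b b.2]
    have hb : (b : ℕ) < n - i := lt_of_lt_of_eq b.2 hB'len
    exact hincs (i + b) (by omega) (i + a) (by omega) (by omega)
  have hleafA : ∀ m, m < i → IsLeafF F (L.getD m []) := by
    intro m hm
    have hmn : m < n := by omega
    have hpos : PosF F (L.getD m []) := (hmem _).1 (hmemL hmn)
    refine ⟨hpos, fun hc => ?_⟩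
    have hqL : L.getD m [] ++ [0] ∈ L := (hmem _).2 hc
    obtain ⟨⟨m', hm'⟩, hq⟩ := List.mem_iff_get.1 hqL
    have hgm' : L.getD m' [] = L.getD m [] ++ [0] := by
      rw [getD_eq_get_old _ _ hm']; exact hq
    have hmm' : m' ≠ m := by
      rintro rfl
      rw [hgm'] at hgm'
      exact absurd hgm'.symm (by simp)
    rcases Nat.lt_or_ge m' m with h | h
    · have h1 : postLt (L.getD m []) (L.getD m' []) := hdecs m (by omega) m' h
      rw [hgm'] at h1
      exact postLt_asymm h1 (postLt_append _ _ (by simp))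
    · have h' : m < m' := by omega
      have hmL : m < L.length := by omega
      have hR := List.pairwise_iff_get.1 hpw ⟨m, hmL⟩ ⟨m', hm'⟩ (Fin.mk_lt_mk.2 h')
      have hgm : L.getD m [] = L.get ⟨m, hmL⟩ := getD_eq_get_old _ _ hmL
      refine hR ⟨?_, ?_⟩
      · rw [hq, ← hgm]
        exact ⟨[0], rfl⟩
      · rw [hq, ← hgm]
        simp
  have hnoth₀ : ∀ m, m < i → L.getD m [] ≠ h₀ := by
    intro m hm heq
    have h1 : postLt (L.getD (m + 1) []) (L.getD m []) := hdec m (by omega)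
    rw [heq] at h1
    have hmem1 : L.getD (m + 1) [] ∈ postF F := by
      exact (mem_postF F _).2 ((hmem _).1 (hmemL (by omega : m + 1 < n)))
    by_cases he : L.getD (m + 1) [] = h₀
    · rw [he] at h1; exact postLt_irrefl _ h1
    · exact postLt_asymm (head_min hne _ hmem1 he) h1
  set S := (L.take i).toFinset with hSdef
  have hA'nd : (L.take i).Nodup := (List.take_sublist i L).nodup hnd
  have hB'nd : (L.drop i).Nodup := (List.drop_sublist i L).nodup hnd
  have hScard : S.card = i := by
    rw [hSdef, List.toFinset_card_of_nodup hA'nd, hA'len]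
  have hSsub : S ⊆ (leavesF F).toFinset.erase h₀ := by
    intro p hp
    rw [hSdef, List.mem_toFinset, List.mem_iff_get] at hp
    obtain ⟨⟨m, hm⟩, rfl⟩ := hp
    rw [hA'get m hm]
    have hmi : m < i := lt_of_lt_of_eq hm hA'len
    exact Finset.mem_erase.2 ⟨hnoth₀ m hmi,
      List.mem_toFinset.2 ((mem_leavesF F _).2 (hleafA m hmi))⟩
  refine ⟨S, hSsub, hScard, ?_⟩
  have hmemPS : ∀ p ∈ S, p ∈ postF F := by
    intro p hp
    have hpL : p ∈ L := (List.take_sublist i L).subset (List.mem_toFinset.1 hp)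
    exact (mem_postF F p).2 ((hmem p).1 hpL)
  have hdisj : ∀ q ∈ L.take i, q ∈ L.drop i → False := by
    have h := List.nodup_append.1 (by rw [List.take_append_drop]; exact hnd :
      (L.take i ++ L.drop i).Nodup)
    exact fun q hq hq' => h.2.2 q hq q hq' rfl
  have hAeq : L.take i = ((postF F).filter (· ∈ S)).reverse := by
    apply eq_of_perm_of_sorted_old (r := flip postLt)
    · apply List.perm_of_nodup_nodup_toFinset_eq hA'nd
        (List.nodup_reverse.2 ((nodup_postF F).filter _))
      rw [List.toFinset_reverse, toFinset_filter_mem hmemPS]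
    · exact hApair
    · exact List.pairwise_reverse.2 ((pairwise_postF F).filter _)
  have hBeq : L.drop i = (postF F).filter (· ∉ S) := by
    apply eq_of_perm_of_sorted_old (r := postLt)
    · apply List.perm_of_nodup_nodup_toFinset_eq hB'nd ((nodup_postF F).filter _)
      ext q
      simp only [List.mem_toFinset, List.mem_filter, decide_eq_true_eq]
      constructor
      · intro hq
        refine ⟨(mem_postF F q).2 ((hmem q).1 ((List.drop_sublist i L).subset hq)), ?_⟩
        intro hqS
        exact hdisj q (List.mem_toFinset.1 hqS) hq
      · rintro ⟨hqP, hqS⟩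
        have hqL : q ∈ L := (hmem q).2 ((mem_postF F q).1 hqP)
        rw [← List.take_append_drop i L, List.mem_append] at hqL
        rcases hqL with h | h
        · exact absurd (List.mem_toFinset.2 h) hqS
        · exact h
    · exact hBpair
    · exact (pairwise_postF F).filter _
  conv_lhs => rw [← List.take_append_drop i L]
  rw [hAeq, hBeq, extL]

/-! ### The count -/

lemma ncard_descents {F : List PlaneTree} {n k : ℕ} (hF : sizeF F = n) (hn : 1 ≤ n)
    (hleaf : leafF F = k + 1) {i : ℕ} (hi : i ≤ n - 1) :
    Set.ncard {L : List (List ℕ) | IsLinExt F L ∧ ∀ j ∈ Finset.Icc 1 (n - 1),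
      (postLt (L.getD j []) (L.getD (j - 1) []) ↔ j ≤ i)} = k.choose i := by
  classical
  set E := (leavesF F).toFinset.erase (postF F).headI with hE
  have hne : postF F ≠ [] := by
    intro h
    have h2 := (length_postF F).trans hF
    rw [h] at h2
    simp at h2
    omega
  have hlvnd : (leavesF F).Nodup := (sublist_leavesF F).nodup (nodup_postF F)
  have hh₀lv : (postF F).headI ∈ (leavesF F).toFinset :=
    List.mem_toFinset.2 ((mem_leavesF F _).2 (head_leaf hne))
  have hEcard : E.card = k := by
    rw [hE, Finset.card_erase_of_mem hh₀lv, List.toFinset_card_of_nodup hlvnd,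
      length_leavesF, hleaf]
    omega
  have hset : {L : List (List ℕ) | IsLinExt F L ∧ ∀ j ∈ Finset.Icc 1 (n - 1),
      (postLt (L.getD j []) (L.getD (j - 1) []) ↔ j ≤ i)} =
      ↑((E.powersetCard i).image (fun S => extL S F)) := by
    ext L
    simp only [Set.mem_setOf_eq, Finset.coe_image, Set.mem_image, Finset.mem_coe,
      Finset.mem_powersetCard]
    constructor
    · rintro ⟨h1, h2⟩
      obtain ⟨S, hsub, hcard, rfl⟩ := extL_unique hF hn hi h1 h2
      exact ⟨S, ⟨hsub, hcard⟩, rfl⟩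
    · rintro ⟨S, ⟨hsub, hcard⟩, rfl⟩
      obtain ⟨h1, h2⟩ := extL_spec hF hn hsub
      exact ⟨h1, fun j hj => (h2 j hj).trans (by rw [hcard])⟩
  rw [hset, Set.ncard_coe_finset, Finset.card_image_of_injOn ?_, Finset.card_powersetCard,
    hEcard]
  intro S1 h1 S2 h2 heq
  rw [Finset.mem_coe, Finset.mem_powersetCard] at h1 h2
  have hm1 : ∀ p ∈ S1, p ∈ postF F := fun p hp => (mem_postF F p).2
    ((mem_leavesF F p).1 (List.mem_toFinset.1 (Finset.mem_of_mem_erase (h1.1 hp)))).1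
  have hm2 : ∀ p ∈ S2, p ∈ postF F := fun p hp => (mem_postF F p).2
    ((mem_leavesF F p).1 (List.mem_toFinset.1 (Finset.mem_of_mem_erase (h2.1 hp)))).1
  have hl1 : (((postF F).filter (· ∈ S1)).reverse).length = i := by
    rw [List.length_reverse, length_filter_mem hm1, h1.2]
  have hl2 : (((postF F).filter (· ∈ S2)).reverse).length = i := by
    rw [List.length_reverse, length_filter_mem hm2, h2.2]
  have hAeq := List.append_inj_left heq (hl1.trans hl2.symm)
  have hfeq : (postF F).filter (· ∈ S1) = (postF F).filter (· ∈ S2) :=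
    List.reverse_injective hAeq
  rw [← toFinset_filter_mem hm1, ← toFinset_filter_mem hm2, hfeq]

open Polynomial in
/-- For a plane forest `F` with `n` nodes and `k+1` leaves: the number of linear
extensions of `F` of descent composition `(1^i, n-i)` (descents exactly at `1,…,i`)
is the binomial coefficient `C(k,i)` for `0 ≤ i ≤ k`; consequently the generating
polynomial `(1-q)·Σᵢ #{extensions of shape (1^i,n-i)}·(-q)^i` is divisible by `(1-q)²`
if and only if `F` is not a linear tree (path), i.e. iff `k ≠ 0`. -/
theorem linear_extensions_hook_count (n k : ℕ) (hn : 1 ≤ n) (F : List PlaneTree)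
    (hF : sizeF F = n) (hleaf : leafF F = k + 1) :
    (∀ i ≤ k, Set.ncard {L : List (List ℕ) | IsLinExt F L ∧
        ∀ j ∈ Finset.Icc 1 (n - 1),
          (postLt (L.getD j []) (L.getD (j - 1) []) ↔ j ≤ i)} = k.choose i) ∧
    (((1 - X : ℤ[X]) ^ 2 ∣
        (1 - X) * ∑ i ∈ Finset.range n,
          (Set.ncard {L : List (List ℕ) | IsLinExt F L ∧
            ∀ j ∈ Finset.Icc 1 (n - 1),
              (postLt (L.getD j []) (L.getD (j - 1) []) ↔ j ≤ i)} : ℤ[X]) * (-X) ^ i) ↔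
      k ≠ 0) := by
  have hkn : k + 1 ≤ n := by
    rw [← hleaf, ← hF]
    exact leafF_le_sizeF F
  constructor
  · intro i hik
    exact ncard_descents hF hn hleaf (by omega)
  · have hsum : (∑ i ∈ Finset.range n,
        (Set.ncard {L : List (List ℕ) | IsLinExt F L ∧
          ∀ j ∈ Finset.Icc 1 (n - 1),
            (postLt (L.getD j []) (L.getD (j - 1) []) ↔ j ≤ i)} : ℤ[X]) * (-X) ^ i) =
        (1 - X) ^ k := by
      rw [Finset.sum_congr rfl (fun i hi => by
        rw [ncard_descents hF hn hleaf (by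
          rw [Finset.mem_range] at hi; omega)])]
      rw [← Finset.sum_subset (Finset.range_subset_range.2 hkn) (fun x _ hx => by
        rw [Finset.mem_range, not_lt] at hx
        rw [Nat.choose_eq_zero_of_lt (by omega)]
        simp)]
      have h1 : (-X + 1 : ℤ[X]) = 1 - X := by ring
      rw [← h1, add_pow]
      refine Finset.sum_congr rfl fun m _ => by ring
    rw [hsum]
    constructor
    · intro hdvd hk0
      subst hk0
      rw [pow_zero, mul_one] at hdvd
      have h0 : (1 - X : ℤ[X]) ≠ 0 := by
        intro h
        have h2 := congrArg (fun p : ℤ[X] => p.coeff 1) h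
        simp [coeff_one] at h2
      have hdeg := Polynomial.natDegree_le_of_dvd hdvd h0
      have h1 : (1 - X : ℤ[X]).natDegree = 1 := by
        have h2 : (1 - X : ℤ[X]) = -(X - C 1) := by
          rw [map_one]; ring
        rw [h2, natDegree_neg, natDegree_X_sub_C]
      rw [Polynomial.natDegree_pow, h1] at hdeg
      omega
    · intro hk
      obtain ⟨m, rfl⟩ : ∃ m, k = m + 1 := ⟨k - 1, by omega⟩
      exact ⟨(1 - X) ^ m, by ring⟩

end PlaneTree
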